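/- Let k ≥ 1, let B be a binary de Bruijn sequence of order k, and let T = φ(B), where φ(0) = abababaabaababa and φ(1) = abababaababaaba. If T' is a string over {a,b} with |T'| = |T| that differs from T in exactly one position, then T' is superprimitive, i.e., T' has no proper cover. (In this situation T' contains exactly one maximal run a^s with 3 ≤ s ≤ 5, or exactly one maximal run b^t with 2 ≤ t ≤ 3, whereas T contains no substring aaa and no substring bb.) -/

import Mathlib

section Defs

variable {α : Type*}

/-- `C` occurs in `T` at starting position `i`. -/
def OccursAt (C T : List α) (i : ℕ) : Prop :=
  i + C.length ≤ T.length ∧ (T.drop i).take C.length = C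

/-- `C` is a cover of `T`: `C` occurs in `T` and every position of `T`
lies within an occurrence of `C`. -/
def IsCover (C T : List α) : Prop :=
  (∃ i, OccursAt C T i) ∧
    ∀ q, q < T.length → ∃ i, OccursAt C T i ∧ i ≤ q ∧ q < i + C.length

/-- A border of `T` is both a prefix and a suffix of `T`. -/
def IsBorder (B T : List α) : Prop := B <+: T ∧ B <:+ T

/-- `p` is a period of `U`: `U[i] = U[i+p]` for all `0 ≤ i < |U| - p`. -/
def IsPeriod (p : ℕ) (U : List α) : Prop :=
  0 < p ∧ ∀ i, i + p < U.length → U[i]? = U[i + p]?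

/-- `U` is aperiodic: its smallest period `p` satisfies `2p > |U|`
(equivalently, every period `p` of `U` satisfies `2p > |U|`). -/
def StrAperiodic (U : List α) : Prop := ∀ p, IsPeriod p U → U.length < 2 * p

/-- A nonempty string `X` is primitive if `X = Y^t` implies `t = 1`. -/
def StrPrimitive (X : List α) : Prop :=
  X ≠ [] ∧ ∀ (Y : List α) (t : ℕ), X = (List.replicate t Y).flatten → t = 1

/-- A string is superprimitive if it has no proper cover. -/
def Superprimitive (T : List α) : Prop :=
  ¬ ∃ C : List α, IsCover C T ∧ C.length < T.length

/-- The length of the shortest cover of `T`. -/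
noncomputable def covLen (T : List α) : ℕ :=
  sInf {c | ∃ C : List α, C.length = c ∧ IsCover C T}

/-- `{a, a+p, ..., a+(t-1)p}` is a maximal arithmetic progression with
difference `p` inside the set `S`. -/
def MaxProg (S : Set ℕ) (p a t : ℕ) : Prop :=
  0 < t ∧ (∀ r, r < t → a + r * p ∈ S) ∧ (∀ b, b + p = a → b ∉ S) ∧ a + t * p ∉ S

end Defs

/-- The letter `a`. -/
def la : Bool := true
/-- The letter `b`. -/
def lb : Bool := false

/-- `φ(0) = abababa·aba·ababa`. -/
def phi0 : List Bool := [la,lb,la,lb,la,lb,la, la,lb,la, la,lb,la,lb,la]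
/-- `φ(1) = abababa·ababa·aba`. -/
def phi1 : List Bool := [la,lb,la,lb,la,lb,la, la,lb,la,lb,la, la,lb,la]

/-- The morphism `φ` on letters (`false` = 0, `true` = 1). -/
def phi (s : Bool) : List Bool := if s then phi1 else phi0

/-- `φ` applied letter by letter to a binary string. -/
def phiStr (S : List Bool) : List Bool := (S.map phi).flatten

/-- `B` is a binary de Bruijn sequence of order `k`: it has length `2^k + k - 1`
and every length-`k` binary string occurs in it exactly once. -/
def DeBruijn (k : ℕ) (B : List Bool) : Prop :=
  B.length = 2 ^ k + k - 1 ∧ ∀ W : List Bool, W.length = k → ∃! i, OccursAt W B i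

/-!
Every factor of `φ(B)` of length at most 16 lies inside `φ(x) φ(y)` for two letters `x, y`, so
finitely many checks show that `φ(B)` contains neither `aaa` nor `bb`, begins with `ab`, ends with
`ba`, and has no factor of length 14 with period 1 or 2.

A proper cover `C` of `T'` is a border, so `|T'| - |C|` is a period of `T'`; since `T'` agrees
with `φ(B)` on some factor of length 14, this period is at least 3. Changing a `b` into an `a`
creates an `aaa`, changing an `a` into a `b` creates a `bb`, and every occurrence of it in `T'`
meets the changed position. If `C` contained it, its copies in the prefix and the suffix
occurrence of `C` would be less than 3 apart; so the occurrences of `C` covering it must begin or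
end inside it. For `bb` this makes `T'` begin and end with `b`. For `aaa` it makes `T'` begin or
end with `aa`, which is only possible when the change sits next to that end, and then `C` itself
begins or ends with `aaa`.
-/

section Occurrences

variable {α : Type*} {C T W : List α} {i p f j : ℕ}

theorem occursAt_iff_getElem? :
    OccursAt C T i ↔ i + C.length ≤ T.length ∧ ∀ j < C.length, T[i + j]? = C[j]? := by
  refine and_congr_right fun hle => ⟨fun h j hj => ?_, fun h => ?_⟩
  · rw [← h, List.getElem?_take_of_lt hj, List.getElem?_drop]
  · refine List.ext_getElem? fun j => ?_
    rcases lt_or_ge j C.length with hj | hj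
    · rw [List.getElem?_take_of_lt hj, List.getElem?_drop, h j hj]
    · rw [List.getElem?_eq_none (by simp only [List.length_take, List.length_drop]; omega),
        List.getElem?_eq_none hj]

theorem OccursAt.getElem? (h : OccursAt C T i) (hj : j < C.length) : T[i + j]? = C[j]? :=
  (occursAt_iff_getElem?.1 h).2 j hj

theorem occursAt_singleton {x : α} (h : T[i]? = some x) : OccursAt [x] T i :=
  occursAt_iff_getElem?.2 ⟨(List.getElem?_eq_some_iff.1 h).1, fun j hj => by
    obtain rfl : j = 0 := by simpa using hj
    exact h⟩

theorem occursAt_cons {x : α} (h : T[i]? = some x) (hW : OccursAt W T (i + 1)) :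
    OccursAt (x :: W) T i := by
  rw [occursAt_iff_getElem?] at hW ⊢
  refine ⟨by simp only [List.length_cons]; omega, fun j hj => ?_⟩
  cases j with
  | zero => exact h
  | succ j =>
    rw [← Nat.add_assoc, Nat.add_right_comm, hW.2 j (by simpa using hj)]
    rfl

theorem OccursAt.trans (hC : OccursAt C T i) (hW : OccursAt W C f) : OccursAt W T (i + f) := by
  rw [occursAt_iff_getElem?] at hC hW ⊢
  refine ⟨by omega, fun j hj => ?_⟩
  rw [Nat.add_assoc, hC.2 _ (by omega), hW.2 j hj]

theorem OccursAt.occursAt_sub (hC : OccursAt C T i) (hW : OccursAt W T p) (hip : i ≤ p)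
    (hpi : p + W.length ≤ i + C.length) : OccursAt W C (p - i) := by
  rw [occursAt_iff_getElem?] at hC hW ⊢
  refine ⟨by omega, fun j hj => ?_⟩
  rw [← hC.2 _ (by omega), ← hW.2 j hj]
  congr 1
  omega

theorem isPeriod_iff : IsPeriod p T ↔ 0 < p ∧ ∀ i < T.length - p, T[i]? = T[i + p]? :=
  and_congr_right fun _ => forall_congr' fun i =>
    ⟨fun h hi => h (by omega), fun h hi => h (by omega)⟩

theorem IsPeriod.of_occursAt (hT : IsPeriod p T) (hW : OccursAt W T i) : IsPeriod p W := by
  refine ⟨hT.1, fun j hj => ?_⟩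
  rw [← hW.getElem? (by omega), ← hW.getElem? hj, ← Nat.add_assoc]
  exact hT.2 _ (by have := hW.1; omega)

theorem IsCover.occursAt_zero (h : IsCover C T) : OccursAt C T 0 := by
  obtain ⟨i, hi⟩ := h.1
  rcases Nat.eq_zero_or_pos T.length with hT | hT
  · have := hi.1
    rwa [show i = 0 by omega] at hi
  · obtain ⟨i, hi, hle, -⟩ := h.2 0 hT
    rwa [show i = 0 by omega] at hi

theorem IsCover.occursAt_length_sub (h : IsCover C T) :
    OccursAt C T (T.length - C.length) := by
  obtain ⟨i, hi⟩ := h.1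
  have := hi.1
  rcases Nat.eq_zero_or_pos T.length with hT | hT
  · rwa [show i = T.length - C.length by omega] at hi
  · obtain ⟨i, hi, -, hlt⟩ := h.2 (T.length - 1) (by omega)
    have := hi.1
    rwa [show i = T.length - C.length by omega] at hi

theorem IsCover.getElem?_of_lt (h : IsCover C T) (hj : j < C.length) : T[j]? = C[j]? := by
  simpa using h.occursAt_zero.getElem? hj

theorem IsCover.isPeriod (h : IsCover C T) (hlt : C.length < T.length) :
    IsPeriod (T.length - C.length) T := by
  refine ⟨by omega, fun j hj => ?_⟩
  have hj' : j < C.length := by omega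
  rw [h.getElem?_of_lt hj', Nat.add_comm, h.occursAt_length_sub.getElem? hj']

theorem IsCover.exists_getElem?_eq {x : α} (h : IsCover C T) (hx : T[p]? = some x) :
    ∃ j : ℕ, C[j]? = some x := by
  obtain ⟨i, hi, hip, hpi⟩ := h.2 p (List.getElem?_eq_some_iff.1 hx).1
  exact ⟨p - i, by rw [← hi.getElem? (by omega), Nat.add_sub_cancel' hip, hx]⟩

theorem IsCover.exists_occursAt_of_not_occursAt (h : IsCover C T) (hW : OccursAt W T p)
    (hWC : ∀ f, ¬ OccursAt W C f) {r : ℕ} (hr : r < T.length) :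
    ∃ i, OccursAt C T i ∧ i ≤ r ∧ r < i + C.length ∧
      (p < i ∨ i + C.length < p + W.length) := by
  obtain ⟨i, hi, hir, hri⟩ := h.2 r hr
  refine ⟨i, hi, hir, hri, ?_⟩
  by_contra hin
  exact hWC _ (hi.occursAt_sub hW (by omega) (by omega))

end Occurrences

section OneChange

variable {α : Type*} {C T T' W : List α} {q p f : ℕ}

theorem exists_forall_ne_getElem?_eq (hlen : T'.length = T.length)
    (hdiff : ∃! i, i < T.length ∧ T'[i]? ≠ T[i]?) :
    ∃ q < T.length, T'[q]? ≠ T[q]? ∧ ∀ i ≠ q, T'[i]? = T[i]? := by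
  obtain ⟨q, ⟨hq, hne⟩, huniq⟩ := hdiff
  refine ⟨q, hq, hne, fun i hi => ?_⟩
  by_contra h
  refine hi (huniq i ⟨lt_of_not_ge fun hge => h ?_, h⟩)
  rw [List.getElem?_eq_none hge, List.getElem?_eq_none (hlen ▸ hge)]

theorem eq_of_getElem?_ne (hagree : ∀ i ≠ q, T'[i]? = T[i]?) {r : ℕ}
    (h : T'[r]? ≠ T[r]?) : r = q :=
  by_contra fun hr => h (hagree r hr)

theorem OccursAt.of_agree (hagree : ∀ i ≠ q, T'[i]? = T[i]?) (hlen : T'.length = T.length)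
    (h : OccursAt W T' p) (hq : q < p ∨ p + W.length ≤ q) : OccursAt W T p := by
  rw [occursAt_iff_getElem?] at h ⊢
  refine ⟨hlen ▸ h.1, fun j hj => ?_⟩
  rw [← hagree _ (by omega), h.2 j hj]

theorem OccursAt.le_and_lt_of_agree (hagree : ∀ i ≠ q, T'[i]? = T[i]?)
    (hlen : T'.length = T.length) (hT : ∀ p, ¬ OccursAt W T p) (h : OccursAt W T' p) :
    p ≤ q ∧ q < p + W.length := by
  by_contra hq
  exact hT p (h.of_agree hagree hlen (by omega))

theorem IsCover.length_sub_lt_of_agree (hagree : ∀ i ≠ q, T'[i]? = T[i]?)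
    (hlen : T'.length = T.length) (hT : ∀ p, ¬ OccursAt W T p) (hC : IsCover C T')
    (hW : OccursAt W C f) : T'.length - C.length < W.length := by
  have h0 := (hC.occursAt_zero.trans hW).le_and_lt_of_agree hagree hlen hT
  have h1 := (hC.occursAt_length_sub.trans hW).le_and_lt_of_agree hagree hlen hT
  omega

end OneChange

section Phi

variable {B : List Bool}

theorem length_phi (c : Bool) : (phi c).length = 15 := by cases c <;> rfl

theorem phiStr_cons (c : Bool) (B : List Bool) : phiStr (c :: B) = phi c ++ phiStr B := by
  simp [phiStr]

theorem length_phiStr (B : List Bool) : (phiStr B).length = 15 * B.length := by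
  induction B with
  | nil => rfl
  | cons c B ih => rw [phiStr_cons, List.length_append, length_phi, ih, List.length_cons]; ring

theorem phiStr_getElem?_eq_pair (B : List Bool) {s L : ℕ} (hL : L ≤ 16)
    (h : s + L ≤ (phiStr B).length) :
    ∃ x y : Bool, ∀ j < L, (phiStr B)[s + j]? = (phiStr [x, y])[s % 15 + j]? := by
  induction B generalizing s with
  | nil => exact ⟨true, true, fun j hj => by
    simp only [phiStr, List.map_nil, List.flatten_nil, List.length_nil] at h
    omega⟩
  | cons c B ih =>
    rw [phiStr_cons, List.length_append, length_phi] at h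
    by_cases hs : 15 ≤ s
    · obtain ⟨x, y, hxy⟩ := ih (s := s - 15) (by omega)
      refine ⟨x, y, fun j hj => ?_⟩
      rw [phiStr_cons, List.getElem?_append_right (by rw [length_phi]; omega), length_phi,
        Nat.mod_eq_sub_mod hs, ← hxy j hj]
      congr 1
      omega
    · rw [Nat.mod_eq_of_lt (by omega)]
      cases B with
      | nil =>
        refine ⟨c, c, fun j hj => ?_⟩
        have hlt : s + j < (phi c).length := by
          simp only [phiStr, List.map_nil, List.flatten_nil, List.length_nil] at h
          rw [length_phi]
          omega
        simp only [phiStr_cons]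
        rw [List.getElem?_append_left hlt, List.getElem?_append_left hlt]
      | cons d B =>
        refine ⟨c, d, fun j hj => ?_⟩
        have hlt : s + j < (phi c ++ phi d).length := by
          simp only [List.length_append, length_phi]
          omega
        simp only [phiStr_cons, ← List.append_assoc]
        rw [List.getElem?_append_left hlt, List.getElem?_append_left hlt]

theorem phiStr_getElem? {i : ℕ} {c : Bool} (hi : i < (phiStr B).length)
    (h : ∀ x y : Bool, (phiStr [x, y])[i % 15]? = some c) : (phiStr B)[i]? = some c := by
  obtain ⟨x, y, hxy⟩ := phiStr_getElem?_eq_pair B (s := i) (L := 1) (by norm_num) hi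
  simpa [h] using hxy 0 Nat.one_pos

theorem OccursAt.exists_phiStr_pair {W : List Bool} {i : ℕ} (h : OccursAt W (phiStr B) i)
    (hW : W.length ≤ 16) : ∃ x y : Bool, OccursAt W (phiStr [x, y]) (i % 15) := by
  obtain ⟨x, y, hxy⟩ := phiStr_getElem?_eq_pair B hW (occursAt_iff_getElem?.1 h).1
  refine ⟨x, y, occursAt_iff_getElem?.2 ⟨?_, fun j hj => ?_⟩⟩
  · have := Nat.mod_lt i (show 15 > 0 by norm_num)
    simp only [phiStr, List.map_cons, List.map_nil, List.flatten_cons, List.flatten_nil,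
      List.append_nil, List.length_append, length_phi]
    omega
  · rw [← hxy j hj, h.getElem? hj]

theorem phiStr_getElem?_zero (hB : 1 ≤ B.length) : (phiStr B)[0]? = some la :=
  phiStr_getElem? (by rw [length_phiStr]; omega) (by decide)

theorem phiStr_getElem?_one (hB : 1 ≤ B.length) : (phiStr B)[1]? = some lb :=
  phiStr_getElem? (by rw [length_phiStr]; omega) (by decide)

theorem phiStr_getElem?_length_sub_two (hB : 1 ≤ B.length) :
    (phiStr B)[(phiStr B).length - 2]? = some lb :=
  phiStr_getElem? (by rw [length_phiStr]; omega)
    (by rw [length_phiStr, show (15 * B.length - 2) % 15 = 13 by omega]; decide)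

theorem phiStr_getElem?_length_sub_one (hB : 1 ≤ B.length) :
    (phiStr B)[(phiStr B).length - 1]? = some la :=
  phiStr_getElem? (by rw [length_phiStr]; omega)
    (by rw [length_phiStr, show (15 * B.length - 1) % 15 = 14 by omega]; decide)

theorem phiStr_not_occursAt_bb (B : List Bool) (i : ℕ) : ¬ OccursAt [lb, lb] (phiStr B) i := by
  intro h
  obtain ⟨x, y, hxy⟩ := h.exists_phiStr_pair (by simp)
  have key : ∀ x y : Bool, ∀ r < 15, ¬ OccursAt [lb, lb] (phiStr [x, y]) r := by
    unfold OccursAt; decide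
  exact key x y _ (Nat.mod_lt _ (by norm_num)) hxy

theorem phiStr_not_occursAt_aaa (B : List Bool) (i : ℕ) :
    ¬ OccursAt [la, la, la] (phiStr B) i := by
  intro h
  obtain ⟨x, y, hxy⟩ := h.exists_phiStr_pair (by simp)
  have key : ∀ x y : Bool, ∀ r < 15, ¬ OccursAt [la, la, la] (phiStr [x, y]) r := by
    unfold OccursAt; decide
  exact key x y _ (Nat.mod_lt _ (by norm_num)) hxy

theorem phiStr_pair_window_not_isPeriod :
    ∀ x y : Bool, ∀ r < 15, ∀ p < 3, ¬ IsPeriod p (((phiStr [x, y]).drop r).take 14) := by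
  simp only [isPeriod_iff]; decide

end Phi

section Flip

variable {B T' C : List Bool} {q : ℕ}

theorem not_isPeriod_of_agree_phiStr (hB : 2 ≤ B.length)
    (hagree : ∀ i ≠ q, T'[i]? = (phiStr B)[i]?) (hlen : T'.length = (phiStr B).length)
    {p : ℕ} (hp : p < 3) : ¬ IsPeriod p T' := by
  intro hper
  have hn := length_phiStr B
  obtain ⟨s, hs, hsq⟩ : ∃ s, s + 14 ≤ T'.length ∧ (q < s ∨ s + 14 ≤ q) := by
    rcases lt_or_ge q 14 with h | h
    · exact ⟨T'.length - 14, by omega, by omega⟩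
    · exact ⟨0, by omega, by omega⟩
  have hUlen : ((T'.drop s).take 14).length = 14 := by
    simp only [List.length_take, List.length_drop]; omega
  have hU : OccursAt ((T'.drop s).take 14) T' s := ⟨by omega, by rw [hUlen]⟩
  obtain ⟨x, y, hxy⟩ := (hU.of_agree hagree hlen (by rwa [hUlen])).exists_phiStr_pair
    (by simp)
  have hUper := hper.of_occursAt hU
  rw [← hxy.2, hUlen] at hUper
  exact phiStr_pair_window_not_isPeriod x y _ (Nat.mod_lt _ (by norm_num)) p hp hUper

theorem exists_occursAt_bb_of_flip (hB : 1 ≤ B.length)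
    (hagree : ∀ i ≠ q, T'[i]? = (phiStr B)[i]?) (hq : (phiStr B)[q]? = some la)
    (hq' : T'[q]? = some lb) : ∃ p, OccursAt [lb, lb] T' p := by
  have hqn := (List.getElem?_eq_some_iff.1 hq).1
  rcases Nat.eq_zero_or_pos q with rfl | hq0
  · exact ⟨0, occursAt_cons hq' (occursAt_singleton
      ((hagree 1 one_ne_zero).trans (phiStr_getElem?_one hB)))⟩
  obtain ⟨r, rfl⟩ : ∃ r, q = r + 1 := ⟨q - 1, by omega⟩
  obtain ⟨c, hc⟩ : ∃ c, (phiStr B)[r]? = some c :=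
    ⟨_, List.getElem?_eq_getElem (by omega)⟩
  cases c
  · exact ⟨r, occursAt_cons ((hagree r (by omega)).trans hc) (occursAt_singleton hq')⟩
  have hrn : r + 2 < (phiStr B).length := by
    by_contra h
    have := phiStr_getElem?_length_sub_two hB
    rw [show (phiStr B).length - 2 = r by omega, hc] at this
    exact absurd this (by decide)
  obtain ⟨d, hd⟩ : ∃ d, (phiStr B)[r + 2]? = some d := ⟨_, List.getElem?_eq_getElem hrn⟩
  cases d
  · exact ⟨r + 1, occursAt_cons hq' (occursAt_singleton ((hagree _ (by omega)).trans hd))⟩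
  · exact (phiStr_not_occursAt_aaa B r (occursAt_cons hc (occursAt_cons hq
      (occursAt_singleton hd)))).elim

theorem not_isCover_of_flip_to_b (hB : 1 ≤ B.length)
    (hagree : ∀ i ≠ q, T'[i]? = (phiStr B)[i]?) (hlen : T'.length = (phiStr B).length)
    (hq : (phiStr B)[q]? = some la) (hq' : T'[q]? = some lb) (hC : IsCover C T')
    (hπ : 2 ≤ T'.length - C.length) : False := by
  have hn := length_phiStr B
  obtain ⟨p, hbb⟩ := exists_occursAt_bb_of_flip hB hagree hq hq'
  have hCbb : ∀ f, ¬ OccursAt [lb, lb] C f := fun f hf => by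
    have := hC.length_sub_lt_of_agree hagree hlen (phiStr_not_occursAt_bb B) hf
    simp only [List.length_cons, List.length_nil] at this
    omega
  have hp := (occursAt_iff_getElem?.1 hbb).1
  simp only [List.length_cons, List.length_nil] at hp
  -- a cover cannot contain `bb`, so it starts at the second `b` and ends at the first
  obtain ⟨i, hi, hip, hpi, hout⟩ := hC.exists_occursAt_of_not_occursAt hbb hCbb (r := p + 1)
    (by omega)
  obtain ⟨i', hi', hip', hpi', hout'⟩ := hC.exists_occursAt_of_not_occursAt hbb hCbb (r := p)
    (by omega)
  simp only [List.length_cons, List.length_nil] at hout hout'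
  have h0 : T'[0]? ≠ (phiStr B)[0]? := by
    rw [hC.getElem?_of_lt (by omega), phiStr_getElem?_zero hB, ← hi.getElem? (by omega),
      show i + 0 = p + 1 by omega, hbb.getElem? (j := 1) (by simp)]
    decide
  have h1 : T'[T'.length - 1]? ≠ (phiStr B)[T'.length - 1]? := by
    rw [show T'.length - 1 = T'.length - C.length + (C.length - 1) by omega,
      hC.occursAt_length_sub.getElem? (by omega), ← hi'.getElem? (by omega),
      show i' + (C.length - 1) = p + 0 by omega, hbb.getElem? (by simp),
      show T'.length - C.length + (C.length - 1) = (phiStr B).length - 1 by omega,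
      phiStr_getElem?_length_sub_one hB]
    decide
  have := eq_of_getElem?_ne hagree h0
  have := eq_of_getElem?_ne hagree h1
  omega

theorem not_isCover_of_flip_to_a (hB : 1 ≤ B.length)
    (hagree : ∀ i ≠ q, T'[i]? = (phiStr B)[i]?) (hlen : T'.length = (phiStr B).length)
    (hq : (phiStr B)[q]? = some lb) (hq' : T'[q]? = some la) (hC : IsCover C T')
    (hπ : 3 ≤ T'.length - C.length) : False := by
  have hn := length_phiStr B
  have hqn := (List.getElem?_eq_some_iff.1 hq).1
  obtain ⟨r, rfl⟩ : ∃ r, q = r + 1 := ⟨q - 1, by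
    have := phiStr_getElem?_zero hB
    have : q ≠ 0 := by rintro rfl; exact absurd (hq.symm.trans this) (by decide)
    omega⟩
  have hrn : r + 2 < (phiStr B).length := by
    by_contra h
    have := phiStr_getElem?_length_sub_one hB
    rw [show (phiStr B).length - 1 = r + 1 by omega, hq] at this
    exact absurd this (by decide)
  have ha : ∀ s, (s = r ∨ s = r + 2) → T'[s]? = some la := by
    rintro s hs
    rw [hagree s (by omega)]
    obtain ⟨c, hc⟩ : ∃ c, (phiStr B)[s]? = some c :=
      ⟨_, List.getElem?_eq_getElem (by omega)⟩
    cases c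
    · rcases hs with rfl | rfl
      · exact (phiStr_not_occursAt_bb B s (occursAt_cons hc (occursAt_singleton hq))).elim
      · exact (phiStr_not_occursAt_bb B (r + 1) (occursAt_cons hq (occursAt_singleton hc))).elim
    · exact hc
  have haaa : OccursAt [la, la, la] T' r :=
    occursAt_cons (ha r (.inl rfl)) (occursAt_cons hq' (occursAt_singleton (ha _ (.inr rfl))))
  have hCaaa : ∀ f, ¬ OccursAt [la, la, la] C f := fun f hf => by
    have := hC.length_sub_lt_of_agree hagree hlen (phiStr_not_occursAt_aaa B) hf
    simp only [List.length_cons, List.length_nil] at this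
    omega
  obtain ⟨j, hj⟩ : ∃ j : ℕ, C[j]? = some lb := by
    rcases eq_or_ne r 0 with rfl | hr
    · exact hC.exists_getElem?_eq
        ((hagree _ (by omega)).trans (phiStr_getElem?_length_sub_two hB))
    · exact hC.exists_getElem?_eq ((hagree 1 (by omega)).trans (phiStr_getElem?_one hB))
  have hjC := (List.getElem?_eq_some_iff.1 hj).1
  obtain ⟨i, hi, hir, hri, hout⟩ := hC.exists_occursAt_of_not_occursAt haaa hCaaa (r := r + 1)
    (by omega)
  have hbj := (hi.getElem? hjC).trans hj
  simp only [List.length_cons, List.length_nil] at hout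
  rcases (show i = r + 1 ∨ i + C.length = r + 2 by omega) with rfl | hend
  · -- `C` starts with `aa`, hence so does `T'`, which forces `r = 0`
    have hj2 : 2 ≤ j := by
      by_contra h
      interval_cases j
      · exact absurd (hbj.symm.trans hq') (by decide)
      · exact absurd (hbj.symm.trans (ha _ (.inr rfl))) (by decide)
    have h1 : T'[1]? ≠ (phiStr B)[1]? := by
      rw [hC.getElem?_of_lt (by omega), ← hi.getElem? (by omega), ha _ (.inr rfl),
        phiStr_getElem?_one hB]
      decide
    obtain rfl : r = 0 := by have := eq_of_getElem?_ne hagree h1; omega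
    exact hCaaa 0 (hC.occursAt_zero.occursAt_sub haaa le_rfl
      (by simp only [List.length_cons, List.length_nil]; omega))
  · -- `C` ends with `aa`, hence so does `T'`, which forces `r + 3 = |T'|`
    have hj2 : j + 3 ≤ C.length := by
      by_contra h
      obtain h | h : i + j = r + 1 ∨ i + j = r := by omega
      · exact absurd (hbj.symm.trans (h ▸ hq')) (by decide)
      · exact absurd (hbj.symm.trans (h ▸ ha _ (.inl rfl))) (by decide)
    have h2 : T'[T'.length - 2]? ≠ (phiStr B)[T'.length - 2]? := by
      rw [show T'.length - 2 = T'.length - C.length + (C.length - 2) by omega,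
        hC.occursAt_length_sub.getElem? (by omega), ← hi.getElem? (by omega),
        show i + (C.length - 2) = r by omega, ha _ (.inl rfl),
        show T'.length - C.length + (C.length - 2) = (phiStr B).length - 2 by omega,
        phiStr_getElem?_length_sub_two hB]
      decide
    have := eq_of_getElem?_ne hagree h2
    exact hCaaa _ (hC.occursAt_length_sub.occursAt_sub haaa (by omega)
      (by simp only [List.length_cons, List.length_nil]; omega))

end Flip

/-- Let `B` be a binary de Bruijn sequence of order `k ≥ 1` and `T = φ(B)`.
Any string `T'` of the same length as `T` that differs from `T` in exactly one
position is superprimitive. -/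
theorem stmt19 (k : ℕ) (hk : 1 ≤ k) (B : List Bool) (hB : DeBruijn k B)
    (T' : List Bool) (hlen : T'.length = (phiStr B).length)
    (hdiff : ∃! i, i < (phiStr B).length ∧ T'[i]? ≠ (phiStr B)[i]?) :
    Superprimitive T' := by
  rintro ⟨C, hC, hlt⟩
  have hB2 : 2 ≤ B.length := by
    have := Nat.pow_le_pow_right (show 0 < 2 by norm_num) hk
    have := hB.1
    omega
  obtain ⟨q, hq, hne, hagree⟩ := exists_forall_ne_getElem?_eq hlen hdiff
  have hπ : 3 ≤ T'.length - C.length := by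
    by_contra h
    exact not_isPeriod_of_agree_phiStr hB2 hagree hlen (by omega) (hC.isPeriod hlt)
  obtain ⟨c, hc⟩ : ∃ c, (phiStr B)[q]? = some c := ⟨_, List.getElem?_eq_getElem hq⟩
  obtain ⟨c', hc'⟩ : ∃ c', T'[q]? = some c' := ⟨_, List.getElem?_eq_getElem (hlen ▸ hq)⟩
  cases c <;> cases c'
  · exact hne (hc'.trans hc.symm)
  · exact not_isCover_of_flip_to_a (by omega) hagree hlen hc hc' hC hπ
  · exact not_isCover_of_flip_to_b (by omega) hagree hlen hc hc' hC (by omega)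
  · exact hne (hc'.trans hc.symm)
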